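/- arXiv:1803.01834 — 2 statements merged into one kernel-verified Lean document; each statement's English description precedes it below -/
import Mathlib

section
/- For a layer-wise squared loss L_{n-1}(z, y) = (1/2)‖z − y‖², if the target for layer n−1 is set as y^{n-1} = z^{n-1} − ∇_{z^{n-1}} L_n(z^n, t), where z^n is a differentiable function of z^{n-1}, then for any parameter vector w on which z^{n-1} depends differentiably, the gradient of L_{n-1}(z^{n-1}, y^{n-1}) with respect to w (treating y^{n-1} as a constant) equals the gradient of L_n(z^n, t) with respect to w. -/
/-!
The derivative of `w ↦ ½‖z1 w - y‖²` at `w₀` is `⟪z1 w₀ - y, Dz1 ·⟫`, and the target is chosen so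
that the residual `z1 w₀ - y` is exactly the top gradient `∇(Ln ∘ z2)(z1 w₀)`. By the chain rule
the top loss has the same derivative `⟪∇(Ln ∘ z2)(z1 w₀), Dz1 ·⟫`, hence the same gradient.
-/

theorem HasFDerivAt.half_norm_sub_sq {E F : Type*} [NormedAddCommGroup E] [NormedSpace ℝ E]
    [NormedAddCommGroup F] [InnerProductSpace ℝ F] {f : E → F} {f' : E →L[ℝ] F} {x : E}
    (hf : HasFDerivAt f f' x) (y : F) :
    HasFDerivAt (fun w => (1/2 : ℝ) * ‖f w - y‖ ^ 2) ((innerSL ℝ (f x - y)).comp f') x :=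
  ((hf.sub_const y).norm_sq.const_mul (1/2 : ℝ)).congr_fderiv (by ext; simp)

/-- Base case of backprop-as-targetprop. With squared layerwise loss
`L_{n-1}(z,y) = (1/2)‖z-y‖²` and target `y^{n-1} = z^{n-1}(w₀) - ∇_{z} L_n(z^n(z), t)` evaluated
at the current feedforward value, the gradient w.r.t. the parameters `w` of the layerwise loss
(with the target held constant) equals the gradient of the top loss w.r.t. `w`. -/
theorem lra_backprop_base_case
    {p d m : ℕ}
    (z1 : EuclideanSpace ℝ (Fin p) → EuclideanSpace ℝ (Fin d))
    (z2 : EuclideanSpace ℝ (Fin d) → EuclideanSpace ℝ (Fin m))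
    (t : EuclideanSpace ℝ (Fin m))
    (Ln : EuclideanSpace ℝ (Fin m) → EuclideanSpace ℝ (Fin m) → ℝ)
    (w₀ : EuclideanSpace ℝ (Fin p))
    (hz1 : DifferentiableAt ℝ z1 w₀)
    (hG : DifferentiableAt ℝ (fun u => Ln (z2 u) t) (z1 w₀))
    (y : EuclideanSpace ℝ (Fin d))
    (hy : y = z1 w₀ - gradient (fun u => Ln (z2 u) t) (z1 w₀)) :
    gradient (fun w => (1/2 : ℝ) * ‖z1 w - y‖ ^ 2) w₀
      = gradient (fun w => Ln (z2 (z1 w)) t) w₀ := by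
  have hresidual : z1 w₀ - y = gradient (fun u => Ln (z2 u) t) (z1 w₀) := by
    rw [hy, sub_sub_cancel]
  have hlayer := hz1.hasFDerivAt.half_norm_sub_sq y
  rw [hresidual] at hlayer
  have htop : HasFDerivAt (fun w => Ln (z2 (z1 w)) t)
      ((innerSL ℝ (gradient (fun u => Ln (z2 u) t) (z1 w₀))).comp (fderiv ℝ z1 w₀)) w₀ :=
    hG.hasGradientAt.hasFDerivAt.comp w₀ hz1.hasFDerivAt
  rw [hlayer.hasGradientAt.gradient, htop.hasGradientAt.gradient]
end

section
/- Inductive step of the backprop-as-targetprop equivalence: suppose for layer k the layerwise loss L_k(z^k, y^k) with y^k held fixed satisfies ∇_w L_k(z^k, y^k) = ∇_w L_n(z^n, t) for all parameters w of layers below k. If the target for layer k−1 is set as y^{k-1} = z^{k-1} − ∇_{z^{k-1}} L_k(z^k, y^k), then ∇_w L_{k-1}(z^{k-1}, y^{k-1}) = ∇_w L_n(z^n, t), where L_{k-1}(z,y) = (1/2)‖z − y‖² and y^{k-1} is held fixed. -/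
/-!
Both parameter gradients factor through the Jacobian of `z^{k-1}`: by the chain rule,
`∇_w L_k = (Dz^{k-1})ᵀ g` with `g = ∇_{z^{k-1}} L_k`, while `∇_w L_{k-1} = (Dz^{k-1})ᵀ (z^{k-1} - y^{k-1})`.
The target `y^{k-1} = z^{k-1} - g` makes the two residuals coincide.
-/

open InnerProductSpace

section TargetPropagation

variable {E F : Type*} [NormedAddCommGroup E] [NormedSpace ℝ E]
  [NormedAddCommGroup F] [InnerProductSpace ℝ F]
  {f : E → F} {f' : E →L[ℝ] F} {x : E}

theorem HasFDerivAt.half_norm_sq_sub (c : F) (hf : HasFDerivAt f f' x) :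
    HasFDerivAt (fun w => (1/2 : ℝ) * ‖f w - c‖ ^ 2) ((innerSL ℝ (f x - c)).comp f') x := by
  refine (((hf.sub_const c).norm_sq).const_mul (1/2 : ℝ)).congr_fderiv ?_
  ext v
  simp only [smul_apply, ContinuousLinearMap.comp_apply, innerSL_apply_apply]
  rw [two_smul, smul_add, ← add_smul]
  norm_num

theorem HasGradientAt.hasFDerivAt_comp [CompleteSpace F] {g : F → ℝ} {v : F}
    (hg : HasGradientAt g v (f x)) (hf : HasFDerivAt f f' x) :
    HasFDerivAt (fun w => g (f w)) ((innerSL ℝ v).comp f') x := by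
  refine (hg.hasFDerivAt.comp x hf).congr_fderiv ?_
  ext u
  simp only [ContinuousLinearMap.comp_apply, toDual_apply_apply, innerSL_apply_apply]

end TargetPropagation

theorem gradient_comp_eq_gradient_half_norm_sq_sub_target {E F : Type*} [NormedAddCommGroup E]
    [InnerProductSpace ℝ E] [CompleteSpace E] [NormedAddCommGroup F] [InnerProductSpace ℝ F]
    [CompleteSpace F] {f : E → F} {x : E} {g : F → ℝ} (hg : DifferentiableAt ℝ g (f x)) (hf : DifferentiableAt ℝ f x) :
    gradient (fun w => g (f w)) x =
      gradient (fun w => (1/2 : ℝ) * ‖f w - (f x - gradient g (f x))‖ ^ 2) x := by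
  have hloss := hf.hasFDerivAt.half_norm_sq_sub (f x - gradient g (f x))
  rw [sub_sub_cancel] at hloss
  rw [gradient, gradient, (hg.hasGradientAt.hasFDerivAt_comp hf.hasFDerivAt).fderiv, hloss.fderiv]

/-- Inductive step of the backprop-as-targetprop equivalence. If the gradient of
the layer-`k` squared loss (with fixed target `yk`) w.r.t. the parameters equals the gradient of
the top-level loss `Ltop`, and the target for layer `k-1` is set as
`y^{k-1} = z^{k-1}(w₀) - ∇_{z^{k-1}} L_k(z^k, y^k)`, then the gradient of the layer-`(k-1)`
squared loss (with `y^{k-1}` fixed) also equals the gradient of the top-level loss. -/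
theorem lra_backprop_inductive_step
    {p d d' : ℕ}
    (zk1 : EuclideanSpace ℝ (Fin p) → EuclideanSpace ℝ (Fin d))
    (zk : EuclideanSpace ℝ (Fin d) → EuclideanSpace ℝ (Fin d'))
    (yk : EuclideanSpace ℝ (Fin d'))
    (Ltop : EuclideanSpace ℝ (Fin p) → ℝ)
    (w₀ : EuclideanSpace ℝ (Fin p))
    (hzk1 : DifferentiableAt ℝ zk1 w₀)
    (hzk : DifferentiableAt ℝ zk (zk1 w₀))
    (hIH : gradient (fun w => (1/2 : ℝ) * ‖zk (zk1 w) - yk‖ ^ 2) w₀ = gradient Ltop w₀)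
    (yk1 : EuclideanSpace ℝ (Fin d))
    (hyk1 : yk1 = zk1 w₀ - gradient (fun u => (1/2 : ℝ) * ‖zk u - yk‖ ^ 2) (zk1 w₀)) :
    gradient (fun w => (1/2 : ℝ) * ‖zk1 w - yk1‖ ^ 2) w₀ = gradient Ltop w₀ := by
  have hLk : DifferentiableAt ℝ (fun u => (1/2 : ℝ) * ‖zk u - yk‖ ^ 2) (zk1 w₀) :=
    ((hzk.sub_const yk).norm_sq ℝ).const_mul _
  rw [hyk1, ← hIH]
  exact (gradient_comp_eq_gradient_half_norm_sq_sub_target hLk hzk1).symm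
end
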